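/- Suppose there exists τ̂ ∈ ℝ^N with τ̂_i < φ_i((λ_a + τ̂_{j_a})_{a∈A}) for every node i ≠ d, let (τ, z) solve the dynamic programming system at λ, fix a source node s ∈ N and a scalar x ≥ 0. Then the system of flow conservation equations in the unknowns (v, y) ∈ ℝ^A × ℝ^{N∖{d}} given by: v_a = y_{i_a} · ∂φ_{i_a}/∂z_a(z) for every arc a with i_a ≠ d, and y_i = x·δ_{i,s} + Σ_{a : j_a = i} v_a for every node i ≠ d (where δ_{i,s} = 1 if i = s and 0 otherwise), has a unique solution, given by y = (I − P̂(z)ᵀ)^{-1} δ x and v_a = y_{i_a} · ∂φ_{i_a}/∂z_a(z), and this solution satisfies y ≥ 0 and v ≥ 0 componentwise. -/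

import Mathlib

/-!
Put `V = τ - τ̂`. The gradient inequality for the concave `φ_i` at `z`, applied at
`λ + τ̂ ∘ head` and combined with `τ̂_i < φ_i(λ + τ̂ ∘ head)`, gives
`∑_a ∂_aφ_i(z) V(head a) < V i` for every `i ≠ d`. The weights `∂_aφ_i(z)` sum to one, so
`w = V + c` satisfies the same strict inequality for every constant `c`, and `c` can be chosen to
make `w` positive. Dropping the nonnegative terms of the arcs into `d` then gives `P̂ w < w` with
`w > 0`. A minimum-ratio argument shows that such a `w` forces `(I - P̂) u ≥ 0 → u ≥ 0`, so
`I - P̂` is invertible with a nonnegative inverse. Finally the flow equations are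
`(I - P̂ᵀ) y = δ x`.
-/

open Finset Matrix

theorem ConcaveOn.le_add_of_hasFDerivAt {E : Type*} [NormedAddCommGroup E] [NormedSpace ℝ E]
    {s : Set E} {f : E → ℝ} {f' : E →L[ℝ] ℝ} {x y : E} (hf : ConcaveOn ℝ s f) (hx : x ∈ s)
    (hy : y ∈ s) (hf' : HasFDerivAt f f' x) : f y ≤ f x + f' (y - x) := by
  set g : ℝ →ᵃ[ℝ] E := AffineMap.lineMap x y
  have hline : ConcaveOn ℝ (g ⁻¹' s) (f ∘ g) := hf.comp_affineMap g
  have hderiv : HasDerivAt (f ∘ g) (f' (y - x)) 0 :=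
    hf'.comp_hasDerivAt_of_eq 0 AffineMap.hasDerivAt_lineMap (AffineMap.lineMap_apply_zero x y).symm
  have := hline.slope_le_of_hasDerivAt (by simpa [g] using hx) (by simpa [g] using hy)
    zero_lt_one hderiv
  simp only [slope_def_field, Function.comp_apply, g, AffineMap.lineMap_apply_one,
    AffineMap.lineMap_apply_zero, sub_zero, div_one] at this
  linarith

namespace Matrix

variable {n : Type*} [Fintype n] [DecidableEq n] {P : Matrix n n ℝ} {w : n → ℝ}

theorem nonneg_of_nonneg_one_sub_mulVec (hP : ∀ i j, 0 ≤ P i j) (hw : ∀ i, 0 < w i)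
    (hPw : ∀ i, (P *ᵥ w) i < w i) {u : n → ℝ} (hu : 0 ≤ (1 - P) *ᵥ u) : 0 ≤ u := by
  by_contra hneg
  obtain ⟨i, hi⟩ : ∃ i, u i < 0 := by simpa [Pi.le_def] using hneg
  obtain ⟨k, -, hk⟩ := exists_min_image univ (fun j => u j / w j) ⟨i, mem_univ i⟩
  set r := u k / w k
  have hr : r < 0 := (hk i (mem_univ i)).trans_lt (div_neg_of_neg_of_pos hi (hw i))
  have hru : ∀ j, r * w j ≤ u j := fun j => (le_div_iff₀ (hw j)).1 (hk j (mem_univ j))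
  have hPu : r * (P *ᵥ w) k ≤ (P *ᵥ u) k := by
    simp only [mulVec, dotProduct, mul_sum]
    exact sum_le_sum fun j _ => by nlinarith [hP k j, hru j]
  have huk : u k = r * w k := (div_mul_cancel₀ _ (hw k).ne').symm
  have : ((1 - P) *ᵥ u) k < 0 := by
    rw [sub_mulVec, one_mulVec, Pi.sub_apply]
    nlinarith [hPw k]
  exact (hu k).not_gt this

theorem isUnit_det_one_sub (hP : ∀ i j, 0 ≤ P i j) (hw : ∀ i, 0 < w i)
    (hPw : ∀ i, (P *ᵥ w) i < w i) : IsUnit (1 - P).det := by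
  rw [← isUnit_iff_isUnit_det, ← mulVec_injective_iff_isUnit]
  intro u v huv
  have h : (1 - P) *ᵥ (u - v) = 0 := by rw [mulVec_sub, huv, sub_self]
  have huv := nonneg_of_nonneg_one_sub_mulVec hP hw hPw h.ge
  have hvu := nonneg_of_nonneg_one_sub_mulVec hP hw hPw (u := v - u)
    (by rw [← neg_sub u v, mulVec_neg, h, neg_zero])
  exact le_antisymm (sub_nonneg.1 hvu) (sub_nonneg.1 huv)

theorem inv_one_sub_nonneg (hP : ∀ i j, 0 ≤ P i j) (hw : ∀ i, 0 < w i)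
    (hPw : ∀ i, (P *ᵥ w) i < w i) (i j : n) : 0 ≤ (1 - P)⁻¹ i j := by
  have hcol : (1 - P) *ᵥ ((1 - P)⁻¹ *ᵥ Pi.single j 1) = Pi.single j 1 := by
    rw [mulVec_mulVec, mul_nonsing_inv _ (isUnit_det_one_sub hP hw hPw), one_mulVec]
  have := nonneg_of_nonneg_one_sub_mulVec hP hw hPw (hcol ▸ Pi.single_nonneg.2 zero_le_one) i
  simpa [mulVec_single_one] using this

theorem submatrix_val_mulVec_le {κ' κ μ : Type*} [Fintype μ] {M : Matrix κ μ ℝ}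
    {w : μ → ℝ} (hw : 0 ≤ w) (f : κ' → κ) (p : μ → Prop) [DecidablePred p] (i : κ')
    (hM : ∀ j, 0 ≤ M (f i) j) :
    (M.submatrix f (Subtype.val : {j // p j} → μ) *ᵥ fun j => w j.1) i ≤ (M *ᵥ w) (f i) := by
  simp only [mulVec, dotProduct, submatrix_apply]
  rw [← Fintype.sum_subtype_add_sum_subtype p]
  exact le_add_of_nonneg_right (sum_nonneg fun j _ => mul_nonneg (hM _) (hw _))

end Matrix

section TransitionMatrix

variable {ι κ μ : Type*} [Fintype ι] [DecidableEq κ] [DecidableEq μ]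

/-- With `D i = ∂φ_i(z)` this is the paper's `P(z)`; the column type `μ` may differ from the row
type `κ` so that restricting the arcs to those leaving a set of nodes stays in this form. -/
def transitionMatrix (t : ι → κ) (h : ι → μ) (D : κ → ι → ℝ) : Matrix κ μ ℝ :=
  Matrix.of fun i j => ∑ a with t a = i ∧ h a = j, D i a

theorem transitionMatrix_mulVec_apply [Fintype μ] (t : ι → κ) (h : ι → μ) (D : κ → ι → ℝ)
    (y : μ → ℝ) (i : κ) :
    (transitionMatrix t h D *ᵥ y) i = ∑ a with t a = i, D i a * y (h a) := by
  simp only [mulVec, dotProduct, transitionMatrix, of_apply, sum_mul]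
  rw [← sum_fiberwise _ h]
  refine sum_congr rfl fun j _ => ?_
  rw [filter_filter]
  exact sum_congr rfl fun a ha => by rw [(mem_filter.1 ha).2.2]

theorem transitionMatrix_transpose_mulVec_apply [Fintype κ] (t : ι → κ) (h : ι → μ)
    (D : κ → ι → ℝ) (y : κ → ℝ) (j : μ) :
    ((transitionMatrix t h D)ᵀ *ᵥ y) j = ∑ a with h a = j, D (t a) a * y (t a) := by
  simp only [mulVec, dotProduct, transpose_apply, transitionMatrix, of_apply, sum_mul]
  rw [← sum_fiberwise _ t]
  refine sum_congr rfl fun i _ => ?_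
  rw [filter_filter]
  refine sum_congr (by ext; simp [and_comm]) fun a ha => ?_
  rw [(mem_filter.1 ha).2.2]

theorem transitionMatrix_apply_val {p : κ → Prop} [DecidablePred p] (t : ι → κ) (h : ι → μ)
    (D : κ → ι → ℝ) (i : {i // p i}) (j : μ) :
    transitionMatrix t h D i.1 j =
      transitionMatrix (fun a : {a // p (t a)} => (⟨t a.1, a.2⟩ : {i // p i})) (fun a => h a.1)
        (fun i a => D i.1 a.1) i j := by
  simp only [transitionMatrix, of_apply]
  symm
  refine sum_bij (fun a _ => a.1) (fun a ha => by simpa [Subtype.ext_iff] using ha)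
    (fun a _ b _ hab => Subtype.ext hab) (fun a ha => ?_) (fun _ _ => rfl)
  have hta : t a = i.1 := (mem_filter.1 ha).2.1
  exact ⟨⟨a, hta ▸ i.2⟩, by simpa [Subtype.ext_iff] using ha, rfl⟩

theorem transitionMatrix_submatrix_transpose_mulVec_apply [Fintype κ] {p : κ → Prop}
    [DecidablePred p] (t : ι → κ) (h : ι → κ) (D : κ → ι → ℝ) (y : {i // p i} → ℝ)
    (i : {i // p i}) :
    (((transitionMatrix t h D).submatrix Subtype.val Subtype.val)ᵀ *ᵥ y) i =
      ∑ a : {a // p (t a)} with h a.1 = i.1, D (t a.1) a.1 * y ⟨t a.1, a.2⟩ := by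
  rw [← transitionMatrix_transpose_mulVec_apply
    (fun a : {a // p (t a)} => (⟨t a.1, a.2⟩ : {i // p i})) (fun a => h a.1) (fun i a => D i.1 a.1)]
  simp only [mulVec, dotProduct, transpose_apply, submatrix_apply, transitionMatrix_apply_val]

theorem one_sub_transitionMatrix_transpose_mulVec_eq_iff [Fintype κ] {p : κ → Prop}
    [DecidablePred p] (t : ι → κ) (h : ι → κ) (D : κ → ι → ℝ) (b y : {i // p i} → ℝ) :
    (1 - ((transitionMatrix t h D).submatrix Subtype.val Subtype.val)ᵀ) *ᵥ y = b ↔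
      ∀ i, y i = b i + ∑ a : {a // p (t a)},
        if h a.1 = i.1 then y ⟨t a.1, a.2⟩ * D (t a.1) a.1 else 0 := by
  refine funext_iff.trans (forall_congr' fun i => ?_)
  rw [sub_mulVec, one_mulVec, Pi.sub_apply, transitionMatrix_submatrix_transpose_mulVec_apply,
    sum_filter, sub_eq_iff_eq_add', add_comm]
  simp only [mul_comm (D _ _)]

end TransitionMatrix

theorem exists_pos_transitionMatrix_mulVec_lt {N A : Type} [Fintype N] [Fintype A]
    [DecidableEq N] (tail head : A → N) (d : N) (lam : A → ℝ)
    (phi : N → (A → ℝ) → ℝ) (Dphi : N → (A → ℝ) → A → ℝ)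
    (hconc : ∀ i, i ≠ d → ConcaveOn ℝ Set.univ (phi i))
    (hderiv : ∀ i, i ≠ d → ∀ z : A → ℝ,
      HasFDerivAt (phi i)
        (∑ a, Dphi i z a • (ContinuousLinearMap.proj a : (A → ℝ) →L[ℝ] ℝ)) z)
    (hDnn : ∀ i, i ≠ d → ∀ z a, 0 ≤ Dphi i z a)
    (hDzero : ∀ i, i ≠ d → ∀ (z : A → ℝ) a, tail a ≠ i → Dphi i z a = 0)
    (hDsum : ∀ i, i ≠ d → ∀ z : A → ℝ,
      ∑ a ∈ Finset.univ.filter (fun a => tail a = i), Dphi i z a = 1)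
    (τhat : N → ℝ)
    (hsub : ∀ i, i ≠ d → τhat i < phi i (fun a => lam a + τhat (head a)))
    (τ : N → ℝ) (z : A → ℝ) (hz : ∀ a, z a = lam a + τ (head a))
    (hτ : ∀ i, i ≠ d → τ i = phi i z) :
    ∃ w : {i // i ≠ d} → ℝ, (∀ i, 0 < w i) ∧ ∀ i,
      ((transitionMatrix tail head fun i => Dphi i z).submatrix Subtype.val Subtype.val *ᵥ w) i
        < w i := by
  set V : N → ℝ := τ - τhat
  obtain ⟨c, hc⟩ : ∃ c, ∀ j, 0 < V j + c := by
    refine ⟨∑ j, |V j| + 1, fun j => ?_⟩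
    have := single_le_sum (f := fun j => |V j|) (fun j _ => abs_nonneg _) (mem_univ j)
    linarith [neg_abs_le (V j)]
  refine ⟨fun i => V i.1 + c, fun i => hc i.1, fun ⟨i, hi⟩ => ?_⟩
  have htotal : ∑ a, Dphi i z a = 1 := by
    rw [← hDsum i hi z, sum_filter_of_ne fun a _ ha => by_contra fun h => ha (hDzero i hi z a h)]
  have hdescent : ∑ a, Dphi i z a * V (head a) < V i := by
    have hgrad := (hconc i hi).le_add_of_hasFDerivAt (Set.mem_univ z)
      (Set.mem_univ fun a => lam a + τhat (head a)) (hderiv i hi z)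
    simp only [_root_.sum_apply, _root_.smul_apply, ContinuousLinearMap.proj_apply, Pi.sub_apply,
      hz, add_sub_add_left_eq_sub, smul_eq_mul] at hgrad
    have hV :
        ∑ a, Dphi i z a * (τhat (head a) - τ (head a)) = -∑ a, Dphi i z a * V (head a) := by
      rw [← sum_neg_distrib]
      exact sum_congr rfl fun a _ => by simp only [V, Pi.sub_apply]; ring
    linarith [hsub i hi, hτ i hi, show V i = τ i - τhat i from rfl]
  calc _ ≤ ((transitionMatrix tail head fun i => Dphi i z) *ᵥ fun j => V j + c) i :=
        submatrix_val_mulVec_le (fun j => (hc j).le) _ _ _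
          fun j => sum_nonneg fun a _ => hDnn i hi z a
    _ = ∑ a with tail a = i, Dphi i z a * (V (head a) + c) := transitionMatrix_mulVec_apply ..
    _ = ∑ a, Dphi i z a * (V (head a) + c) :=
        sum_filter_of_ne fun a _ ha => by_contra fun h => ha (by rw [hDzero i hi z a h, zero_mul])
    _ = ∑ a, Dphi i z a * V (head a) + c := by
        simp only [mul_add, sum_add_distrib, ← sum_mul, htotal, one_mul]
    _ < V i + c := by linarith

theorem stmt7_general {N A : Type} [Fintype N] [Fintype A] [DecidableEq N]
    (tail head : A → N) (d : N) (lam : A → ℝ)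
    (phi : N → (A → ℝ) → ℝ) (Dphi : N → (A → ℝ) → A → ℝ)
    (hconc : ∀ i, i ≠ d → ConcaveOn ℝ Set.univ (phi i))
    (hderiv : ∀ i, i ≠ d → ∀ z : A → ℝ,
      HasFDerivAt (phi i)
        (∑ a, Dphi i z a • (ContinuousLinearMap.proj a : (A → ℝ) →L[ℝ] ℝ)) z)
    (hDnn : ∀ i, i ≠ d → ∀ z a, 0 ≤ Dphi i z a)
    (hDzero : ∀ i, i ≠ d → ∀ (z : A → ℝ) a, tail a ≠ i → Dphi i z a = 0)
    (hDsum : ∀ i, i ≠ d → ∀ z : A → ℝ,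
      ∑ a ∈ Finset.univ.filter (fun a => tail a = i), Dphi i z a = 1)
    (τhat : N → ℝ)
    (hsub : ∀ i, i ≠ d → τhat i < phi i (fun a => lam a + τhat (head a)))
    (τ : N → ℝ) (z : A → ℝ)
    (hz : ∀ a, z a = lam a + τ (head a))
    (hτ : ∀ i, i ≠ d → τ i = phi i z)
    (src : N) (x : ℝ) (hx : 0 ≤ x) :
    -- the system of flow conservation equations in unknowns (v, y)
    let Sys : ({a : A // tail a ≠ d} → ℝ) → ({i : N // i ≠ d} → ℝ) → Prop :=
      fun v y =>
        (∀ a : {a : A // tail a ≠ d}, v a = y ⟨tail a.1, a.2⟩ * Dphi (tail a.1) z a.1) ∧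
        (∀ i : {i : N // i ≠ d},
          y i = x * (if i.1 = src then 1 else 0) +
            ∑ a : {a : A // tail a ≠ d}, if head a.1 = i.1 then v a else 0)
    -- the explicit candidate solution
    let Phat : Matrix {i : N // i ≠ d} {i : N // i ≠ d} ℝ :=
      Matrix.of fun i j =>
        ∑ a ∈ Finset.univ.filter (fun a => tail a = i.1 ∧ head a = j.1), Dphi i.1 z a
    let yStar : {i : N // i ≠ d} → ℝ :=
      ((1 - Phat.transpose)⁻¹).mulVec (fun i => if i.1 = src then x else 0)
    let vStar : {a : A // tail a ≠ d} → ℝ :=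
      fun a => yStar ⟨tail a.1, a.2⟩ * Dphi (tail a.1) z a.1
    Sys vStar yStar ∧
    (∀ v y, Sys v y → v = vStar ∧ y = yStar) ∧
    (∀ i, 0 ≤ yStar i) ∧ (∀ a, 0 ≤ vStar a) := by
  intro Sys Phat yStar vStar
  obtain ⟨w, hw, hPw⟩ := exists_pos_transitionMatrix_mulVec_lt tail head d lam phi Dphi hconc
    hderiv hDnn hDzero hDsum τhat hsub τ z hz hτ
  have hPhat : ∀ i j, 0 ≤ Phat i j := fun i j => sum_nonneg fun a _ => hDnn i.1 i.2 z a
  have hdet : IsUnit (1 - Phatᵀ).det := by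
    rw [← transpose_one, ← transpose_sub, det_transpose]
    exact isUnit_det_one_sub hPhat hw hPw
  have hyStar : 0 ≤ yStar := fun i => by
    refine sum_nonneg fun j _ => mul_nonneg ?_ (ite_nonneg hx le_rfl)
    rw [← transpose_one, ← transpose_sub, ← transpose_nonsing_inv]
    exact inv_one_sub_nonneg hPhat hw hPw j i
  have hsolve : ∀ y, (1 - Phatᵀ) *ᵥ y = (fun i => if i.1 = src then x else 0) ↔ y = yStar :=
    fun y => ⟨fun h => by simp only [yStar, ← h, mulVec_mulVec, nonsing_inv_mul _ hdet, one_mulVec],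
      fun h => by simp only [h, yStar, mulVec_mulVec, mul_nonsing_inv _ hdet, one_mulVec]⟩
  have hSys : ∀ v y,
      Sys v y ↔ v = (fun a => y ⟨tail a.1, a.2⟩ * Dphi (tail a.1) z a.1) ∧ y = yStar := by
    intro v y
    rw [← hsolve, show Phat = (transitionMatrix tail head fun i => Dphi i z).submatrix
      Subtype.val Subtype.val from rfl, one_sub_transitionMatrix_transpose_mulVec_eq_iff]
    simp only [Sys, funext_iff, mul_boole]
    exact and_congr_right fun hv => by simp only [hv]
  refine ⟨(hSys _ _).2 ⟨rfl, rfl⟩, fun v y h => ?_, hyStar,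
    fun a => mul_nonneg (hyStar _) (hDnn _ a.2 z _)⟩
  obtain ⟨rfl, rfl⟩ := (hSys v y).1 h
  exact ⟨rfl, rfl⟩

/-- under the strict subsolution hypothesis, for `(τ, z)` solving the
dynamic programming system at `λ`, a source `src` and `x ≥ 0`, the flow
conservation system has a unique solution `(v, y)`, given explicitly by
`y = (I − P̂(z)ᵀ)⁻¹ δ x` and `v_a = y_{i_a} ∂φ_{i_a}/∂z_a(z)`, and this solution
is componentwise nonnegative. -/
theorem stmt7 {N A : Type} [Fintype N] [Fintype A] [DecidableEq N] [DecidableEq A]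
    (tail head : A → N) (d : N) (lam : A → ℝ)
    (phi : N → (A → ℝ) → ℝ) (Dphi : N → (A → ℝ) → A → ℝ)
    (hout : ∀ i, i ≠ d → ∃ a, tail a = i)
    (hdep : ∀ i, i ≠ d → ∀ z z' : A → ℝ, (∀ a, tail a = i → z a = z' a) →
      phi i z = phi i z')
    (hconc : ∀ i, i ≠ d → ConcaveOn ℝ Set.univ (phi i))
    (hderiv : ∀ i, i ≠ d → ∀ z : A → ℝ,
      HasFDerivAt (phi i)
        (∑ a, Dphi i z a • (ContinuousLinearMap.proj a : (A → ℝ) →L[ℝ] ℝ)) z)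
    (hmono : ∀ i, i ≠ d → Monotone (phi i))
    (hDnn : ∀ i, i ≠ d → ∀ z a, 0 ≤ Dphi i z a)
    (hDzero : ∀ i, i ≠ d → ∀ (z : A → ℝ) a, tail a ≠ i → Dphi i z a = 0)
    (hDsum : ∀ i, i ≠ d → ∀ z : A → ℝ,
      ∑ a ∈ Finset.univ.filter (fun a => tail a = i), Dphi i z a = 1)
    (τhat : N → ℝ)
    (hsub : ∀ i, i ≠ d → τhat i < phi i (fun a => lam a + τhat (head a)))
    (τ : N → ℝ) (z : A → ℝ)
    (hτd : τ d = 0) (hz : ∀ a, z a = lam a + τ (head a))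
    (hτ : ∀ i, i ≠ d → τ i = phi i z)
    (src : N) (x : ℝ) (hx : 0 ≤ x) :
    -- the system of flow conservation equations in unknowns (v, y)
    let Sys : ({a : A // tail a ≠ d} → ℝ) → ({i : N // i ≠ d} → ℝ) → Prop :=
      fun v y =>
        (∀ a : {a : A // tail a ≠ d}, v a = y ⟨tail a.1, a.2⟩ * Dphi (tail a.1) z a.1) ∧
        (∀ i : {i : N // i ≠ d},
          y i = x * (if i.1 = src then 1 else 0) +
            ∑ a : {a : A // tail a ≠ d}, if head a.1 = i.1 then v a else 0)
    -- the explicit candidate solution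
    let Phat : Matrix {i : N // i ≠ d} {i : N // i ≠ d} ℝ :=
      Matrix.of fun i j =>
        ∑ a ∈ Finset.univ.filter (fun a => tail a = i.1 ∧ head a = j.1), Dphi i.1 z a
    let yStar : {i : N // i ≠ d} → ℝ :=
      ((1 - Phat.transpose)⁻¹).mulVec (fun i => if i.1 = src then x else 0)
    let vStar : {a : A // tail a ≠ d} → ℝ :=
      fun a => yStar ⟨tail a.1, a.2⟩ * Dphi (tail a.1) z a.1
    Sys vStar yStar ∧
    (∀ v y, Sys v y → v = vStar ∧ y = yStar) ∧
    (∀ i, 0 ≤ yStar i) ∧ (∀ a, 0 ≤ vStar a) :=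
  stmt7_general tail head d lam phi Dphi hconc hderiv hDnn hDzero hDsum τhat hsub τ z hz hτ src x hx
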